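/- Let a ≥ b ≥ 1 be integers such that the pair (a,b) is neither James nor pointed, and let u be a non-null universal p-ary design for (a,b) with coefficient sequence (μ_0,…,μ_{b−1}). Then u is similar to the constant design: there exists α ∈ k such that μ_j = α·C(a+b−j, b−j) in k for all 0 ≤ j < b. -/

import Mathlib

/-!
Double counting the pairs `Y ⊆ X` with `Z ⊆ Y`, `#Z = s`, `#Y = t`, `#X = b` shows that the
coefficients of a universal design on `v` points satisfy `C(v-s, t-s) μ_t = C(b-s, t-s) μ_s`
for `s < t < b`. The constant design satisfies the same linear relations, so with
`q = p ^ ν_p(a+1)` it suffices to show that a solution `ν` with `ν_{b-q} = 0` vanishes. Put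
in codimension, `C(a+y, y-x) ν_{b-x} = C(y, x) ν_{b-y}` for `0 < x < y ≤ b`: vanishing passes
from `x` up to `y` when `p ∤ C(y, x)` and from `y` down to `x` when `p ∤ C(a+y, y-x)`, both
decided by Lucas' theorem. Every `x < q` is reached down from `q` (the last `ν_p(a+1)` digits
of `a + q` are `p - 1`); `x = p^e n` with `1 < n` coprime to `p` is reached up from `p^e`;
a prime power `x > q` is reached up from `q` to `x + q` and back down to `x`, which needs
`x + q ≤ b`: this is exactly what failing to be pointed provides, while failing to be James
gives `q < b`.
-/

open Finset

theorem pow_lt_of_not_pow_log_dvd {p b n m : ℕ} (hp : 1 < p) (hb : b ≠ 0) (hm : p ^ m ∣ n)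
    (h : ¬ p ^ Nat.log p b ∣ n) : p ^ m < b := by
  have hlog : m < Nat.log p b := lt_of_not_ge fun hle => h ((pow_dvd_pow p hle).trans hm)
  exact (Nat.pow_lt_pow_right hp hlog).trans_le (Nat.pow_log_le_self p hb)

namespace Nat.Prime

variable {p : ℕ} (hp : p.Prime)
include hp

theorem dvd_choose_iff_mod_or_div (n k : ℕ) :
    p ∣ n.choose k ↔ p ∣ (n % p).choose (k % p) ∨ p ∣ (n / p).choose (k / p) := by
  have : Fact p.Prime := ⟨hp⟩
  rw [Nat.dvd_iff_mod_eq_zero, Choose.choose_modEq_choose_mod_mul_choose_div_nat,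
    ← Nat.dvd_iff_mod_eq_zero, hp.dvd_mul]

theorem dvd_choose_iff_mod_pow_or_div_pow (m n k : ℕ) :
    p ∣ n.choose k ↔
      p ∣ (n % p ^ m).choose (k % p ^ m) ∨ p ∣ (n / p ^ m).choose (k / p ^ m) := by
  induction m generalizing n k with
  | zero => simp [Nat.mod_one, hp.not_dvd_one]
  | succ m ih =>
    have hmod (r : ℕ) : r % p ^ (m + 1) % p = r % p :=
      Nat.mod_mod_of_dvd r (dvd_pow_self p m.succ_ne_zero)
    have hdiv (r : ℕ) : r % p ^ (m + 1) / p = r / p % p ^ m := by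
      rw [pow_succ', Nat.mod_mul_right_div_self]
    have hdivdiv (r : ℕ) : r / p / p ^ m = r / p ^ (m + 1) := by
      rw [Nat.div_div_eq_div_mul, pow_succ']
    rw [hp.dvd_choose_iff_mod_or_div n k, ih (n / p) (k / p),
      hp.dvd_choose_iff_mod_or_div (n % p ^ (m + 1)), hmod, hmod, hdiv, hdiv, hdivdiv, hdivdiv,
      or_assoc]

theorem not_dvd_choose_pow {m n : ℕ} (hn : ¬ p ∣ n / p ^ m) : ¬ p ∣ n.choose (p ^ m) := by
  rw [hp.dvd_choose_iff_mod_pow_or_div_pow m, Nat.mod_self, Nat.div_self (pow_pos hp.pos m),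
    Nat.choose_zero_right, Nat.choose_one_right]
  exact not_or.mpr ⟨hp.not_dvd_one, hn⟩

theorem not_dvd_choose_pow_sub_one {m j : ℕ} (hj : j < p ^ m) :
    ¬ p ∣ (p ^ m - 1).choose j := by
  induction j with
  | zero => simpa using hp.not_dvd_one
  | succ j ih =>
    have hpascal :
        (p ^ m).choose (j + 1) = (p ^ m - 1).choose j + (p ^ m - 1).choose (j + 1) := by
      rw [← Nat.choose_succ_succ', Nat.sub_add_cancel (pow_pos hp.pos m)]
    have hdvd : p ∣ (p ^ m).choose (j + 1) := Nat.Prime.dvd_choose_pow hp j.succ_ne_zero hj.ne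
    rw [hpascal] at hdvd
    exact fun h => ih (by omega) ((Nat.dvd_add_left h).mp hdvd)

theorem not_dvd_choose_of_mod_pow_eq_sub_one {m n j : ℕ} (hn : n % p ^ m = p ^ m - 1)
    (hj : j < p ^ m) : ¬ p ∣ n.choose j := by
  rw [hp.dvd_choose_iff_mod_pow_or_div_pow m, hn, Nat.mod_eq_of_lt hj, Nat.div_eq_of_lt hj,
    Nat.choose_zero_right]
  exact not_or.mpr ⟨hp.not_dvd_choose_pow_sub_one hj, hp.not_dvd_one⟩

theorem not_dvd_choose_add_pow_of_lt {a m j : ℕ} (ha : p ^ m ∣ a + 1) (hj : j < p ^ m) :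
    ¬ p ∣ (a + p ^ m).choose j := by
  obtain ⟨w, hw⟩ := ha
  have hpm := pow_pos hp.pos m
  refine hp.not_dvd_choose_of_mod_pow_eq_sub_one ?_ hj
  rw [show a + p ^ m = p ^ m * w + (p ^ m - 1) by omega, Nat.mul_add_mod,
    Nat.mod_eq_of_lt (by omega)]

theorem not_dvd_choose_add_pow_mul_succ {a m w c : ℕ} (ha : a + 1 = p ^ m * w) (hw : ¬ p ∣ w)
    (hc : p ∣ c) : ¬ p ∣ (a + p ^ m * (c + 1)).choose (p ^ m) := by
  have hpm := pow_pos hp.pos m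
  refine hp.not_dvd_choose_pow ?_
  have hsplit : a + p ^ m * (c + 1) = p ^ m * (w + c) + (p ^ m - 1) := by
    rw [mul_add, mul_add]; omega
  rw [hsplit, Nat.mul_add_div hpm, Nat.div_eq_of_lt (by omega), add_zero]
  exact fun h => hw ((Nat.dvd_add_left hc).mp h)

end Nat.Prime

section Design

variable {γ : Type*} [Fintype γ] [DecidableEq γ]

theorem card_filter_card_eq_and_subset_and_subset {Z X : Finset γ} (hZX : Z ⊆ X) {t : ℕ}
    (ht : #Z ≤ t) : #{Y | #Y = t ∧ Z ⊆ Y ∧ Y ⊆ X} = (#X - #Z).choose (t - #Z) := by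
  rw [← card_sdiff_of_subset hZX, ← card_powersetCard]
  refine card_nbij' (· \ Z) (· ∪ Z) ?_ ?_ ?_ ?_
  · intro Y hY
    simp only [mem_coe, mem_filter, mem_univ, true_and, mem_powersetCard] at hY ⊢
    exact ⟨sdiff_subset_sdiff hY.2.2 le_rfl, by rw [card_sdiff_of_subset hY.2.1, hY.1]⟩
  · intro A hA
    simp only [mem_coe, mem_filter, mem_univ, true_and, mem_powersetCard] at hA ⊢
    have hdisj : Disjoint A Z := sdiff_disjoint.mono_left hA.1
    refine ⟨by rw [card_union_of_disjoint hdisj, hA.2, Nat.sub_add_cancel ht],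
      subset_union_right, union_subset (hA.1.trans sdiff_subset) hZX⟩
  · intro Y hY
    simp only [mem_coe, mem_filter, mem_univ, true_and] at hY
    exact sdiff_union_of_subset hY.2.1
  · intro A hA
    simp only [mem_coe, mem_powersetCard] at hA
    exact union_sdiff_cancel_right (sdiff_disjoint.mono_left hA.1)

variable {M : Type*} [AddCommMonoid M]

def IsUniversalDesign (u : Finset γ → M) (b : ℕ) (μ : ℕ → M) : Prop :=
  ∀ t < b, ∀ Y : Finset γ, #Y = t → ∑ X with #X = b ∧ Y ⊆ X, u X = μ t

theorem IsUniversalDesign.choose_smul_eq {u : Finset γ → M} {b : ℕ} {μ : ℕ → M}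
    (hu : IsUniversalDesign u b μ) {s t : ℕ} (hs : s ≤ Fintype.card γ) (hst : s ≤ t)
    (htb : t < b) :
    (Fintype.card γ - s).choose (t - s) • μ t = (b - s).choose (t - s) • μ s := by
  obtain ⟨Z, -, hZ⟩ := exists_subset_card_eq (s := (univ : Finset γ)) (n := s)
    (by rwa [card_univ])
  have hZt : #Z ≤ t := hZ ▸ hst
  calc (Fintype.card γ - s).choose (t - s) • μ t
      = ∑ Y with #Y = t ∧ Z ⊆ Y, ∑ X with #X = b ∧ Y ⊆ X, u X := by
        rw [sum_congr rfl fun Y hY => hu t htb Y (mem_filter.mp hY).2.1, sum_const]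
        congr
        simpa [← hZ] using (card_filter_card_eq_and_subset_and_subset (subset_univ Z) hZt).symm
    _ = ∑ X with #X = b ∧ Z ⊆ X, ∑ Y with #Y = t ∧ Z ⊆ Y ∧ Y ⊆ X, u X :=
        sum_comm' fun Y X => by simp only [mem_filter, mem_univ, true_and]; grind
    _ = (b - s).choose (t - s) • μ s := by
        rw [sum_congr rfl fun X hX => by
          obtain ⟨-, hXb, hZX⟩ := mem_filter.mp hX
          rw [sum_const, card_filter_card_eq_and_subset_and_subset hZX hZt, hXb, hZ],
          ← smul_sum, hu s (by omega) Z hZ]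

end Design

section CoeffRelation

variable {R : Type*} [CommRing R]

def DesignCoeffRelation (v b : ℕ) (μ : ℕ → R) : Prop :=
  ∀ s t, s < t → t < b →
    ((v - s).choose (t - s) : R) * μ t = ((b - s).choose (t - s) : R) * μ s

theorem IsUniversalDesign.designCoeffRelation {γ : Type*} [Fintype γ] [DecidableEq γ]
    {u : Finset γ → R} {b : ℕ} {μ : ℕ → R} (hu : IsUniversalDesign u b μ)
    (hb : b ≤ Fintype.card γ) : DesignCoeffRelation (Fintype.card γ) b μ :=
  fun s t hst htb => by simpa only [nsmul_eq_mul] using hu.choose_smul_eq (by omega) hst.le htb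

theorem designCoeffRelation_choose {v b : ℕ} (hb : b ≤ v) :
    DesignCoeffRelation v b fun j => ((v - j).choose (b - j) : R) := fun s t hst htb => by
  have h := Nat.choose_mul (n := v - s) (k := b - s) (s := t - s) (by omega)
  rw [show v - s - (t - s) = v - t by omega, show b - s - (t - s) = b - t by omega] at h
  simp only [← Nat.cast_mul, ← h, mul_comm]

theorem DesignCoeffRelation.sub {v b : ℕ} {μ μ' : ℕ → R} (hμ : DesignCoeffRelation v b μ)
    (hμ' : DesignCoeffRelation v b μ') : DesignCoeffRelation v b (μ - μ') :=
  fun s t hst htb => by simp only [Pi.sub_apply, mul_sub, hμ s t hst htb, hμ' s t hst htb]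

theorem DesignCoeffRelation.const_mul {v b : ℕ} {μ : ℕ → R}
    (hμ : DesignCoeffRelation v b μ) (α : R) : DesignCoeffRelation v b fun j => α * μ j :=
  fun s t hst htb => by simp only [mul_left_comm _ α, hμ s t hst htb]

variable {a b : ℕ} {ν : ℕ → R}

theorem DesignCoeffRelation.choose_mul_sub_eq (hν : DesignCoeffRelation (a + b) b ν) {x y : ℕ}
    (hx : 0 < x) (hxy : x < y) (hy : y ≤ b) :
    ((a + y).choose (y - x) : R) * ν (b - x) = (y.choose x : R) * ν (b - y) := by
  have h := hν (b - y) (b - x) (by omega) (by omega)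
  rwa [show a + b - (b - y) = a + y by omega, show b - x - (b - y) = y - x by omega,
    show b - (b - y) = y by omega, Nat.choose_symm hxy.le] at h

variable [NoZeroDivisors R] {p : ℕ} [CharP R p]

theorem DesignCoeffRelation.eq_zero_of_not_dvd_choose (hν : DesignCoeffRelation (a + b) b ν)
    {x y : ℕ} (hx : 0 < x) (hxy : x < y) (hy : y ≤ b) (h : ν (b - x) = 0)
    (hc : ¬ p ∣ y.choose x) : ν (b - y) = 0 := by
  have := hν.choose_mul_sub_eq hx hxy hy
  rw [h, mul_zero, eq_comm, mul_eq_zero, CharP.cast_eq_zero_iff R p] at this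
  exact this.resolve_left hc

theorem DesignCoeffRelation.eq_zero_of_not_dvd_choose_add
    (hν : DesignCoeffRelation (a + b) b ν) {x y : ℕ} (hx : 0 < x) (hxy : x < y) (hy : y ≤ b)
    (h : ν (b - y) = 0) (hc : ¬ p ∣ (a + y).choose (y - x)) : ν (b - x) = 0 := by
  have := hν.choose_mul_sub_eq hx hxy hy
  rw [h, mul_zero, mul_eq_zero, CharP.cast_eq_zero_iff R p] at this
  exact this.resolve_left hc

theorem DesignCoeffRelation.eq_zero_sub_pow_of_pow_lt (hp : p.Prime)
    (hν : DesignCoeffRelation (a + b) b ν) {m w e : ℕ} (ha : a + 1 = p ^ m * w)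
    (hw : ¬ p ∣ w) (hme : p ^ m < p ^ e) (heb : p ^ e + p ^ m ≤ b) (hq : ν (b - p ^ m) = 0) :
    ν (b - p ^ e) = 0 := by
  obtain ⟨d, rfl⟩ : ∃ d, e = m + (d + 1) :=
    ⟨e - m - 1, by have := (Nat.pow_lt_pow_iff_right hp.one_lt).mp hme; omega⟩
  have hpm := pow_pos hp.pos m
  have hsplit : p ^ (m + (d + 1)) + p ^ m = p ^ m * (p ^ (d + 1) + 1) := by ring
  have hpd : p ∣ p ^ (d + 1) := dvd_pow_self p d.succ_ne_zero
  have hsum : ν (b - (p ^ (m + (d + 1)) + p ^ m)) = 0 := by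
    refine hν.eq_zero_of_not_dvd_choose hpm (by omega) heb hq (hp.not_dvd_choose_pow ?_)
    rw [hsplit, Nat.mul_div_cancel_left _ hpm]
    exact fun h => hp.not_dvd_one ((Nat.dvd_add_right hpd).mp h)
  refine hν.eq_zero_of_not_dvd_choose_add (pow_pos hp.pos _) (by omega) heb hsum ?_
  rw [Nat.add_sub_cancel_left, hsplit]
  exact hp.not_dvd_choose_add_pow_mul_succ ha hw hpd

theorem DesignCoeffRelation.eq_zero (hp : p.Prime) (hν : DesignCoeffRelation (a + b) b ν)
    {m w : ℕ} (ha : a + 1 = p ^ m * w) (hw : ¬ p ∣ w) (hmb : p ^ m ≤ b)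
    (hpow : ∀ e, p ^ e ≤ b → p ^ e + p ^ m ≤ b) (hq : ν (b - p ^ m) = 0) :
    ∀ j < b, ν j = 0 := by
  suffices h : ∀ x, 0 < x → x ≤ b → ν (b - x) = 0 from fun j hj => by
    simpa [show b - (b - j) = j by omega] using h (b - j) (by omega) (by omega)
  intro x
  induction x using Nat.strong_induction_on with | _ x ih => ?_
  intro hx hxb
  rcases lt_trichotomy x (p ^ m) with hlt | rfl | hgt
  · refine hν.eq_zero_of_not_dvd_choose_add hx hlt hmb hq ?_
    exact hp.not_dvd_choose_add_pow_of_lt ⟨w, ha⟩ (by omega)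
  · exact hq
  obtain ⟨e, n, hn, rfl⟩ := Nat.exists_eq_pow_mul_and_not_dvd hx.ne' p hp.ne_one
  have hpe := pow_pos hp.pos e
  rcases Nat.lt_or_ge 1 n with hn1 | hn1
  · have hlt : p ^ e < p ^ e * n := lt_mul_of_one_lt_right hpe hn1
    refine hν.eq_zero_of_not_dvd_choose hpe hlt hxb (ih _ hlt hpe (by omega)) ?_
    exact hp.not_dvd_choose_pow (by rwa [Nat.mul_div_cancel_left _ hpe])
  · obtain rfl : n = 1 := by have := Nat.pos_of_mul_pos_left hx; omega
    rw [mul_one] at *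
    exact hν.eq_zero_sub_pow_of_pow_lt hp ha hw hgt (hpow e hxb) hq

end CoeffRelation

theorem not_james_not_pointed_similar_to_constant_general (p : ℕ) (hp : p.Prime)
    (k : Type*) [Field k] [CharP k p]
    (a b : ℕ) (hb : 1 ≤ b)
    (hNotJames : ¬ p ^ Nat.log p b ∣ a + 1)
    (hNotPointed : ¬ ∃ β bhat : ℕ, b = p ^ β + bhat ∧
        bhat < p ^ padicValNat p (a + 1) ∧ p ^ padicValNat p (a + 1) < b)
    (u : Finset (Fin (a + b)) → k) (μ : ℕ → k)
    (hu : ∀ t < b, ∀ Y : Finset (Fin (a + b)), Y.card = t →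
        ∑ X ∈ univ.filter (fun X : Finset (Fin (a + b)) => X.card = b ∧ Y ⊆ X), u X = μ t) :
    ∃ α : k, ∀ j < b, μ j = α * (Nat.choose (a + b - j) (b - j) : k) := by
  obtain ⟨w, ha, hw⟩ : ∃ w, a + 1 = p ^ padicValNat p (a + 1) * w ∧ ¬ p ∣ w :=
    ⟨ordCompl[p] (a + 1),
      by rw [← Nat.factorization_def _ hp, Nat.ordProj_mul_ordCompl_eq_self],
      Nat.not_dvd_ordCompl hp a.succ_ne_zero⟩
  set m := padicValNat p (a + 1)
  have hmb : p ^ m < b := pow_lt_of_not_pow_log_dvd hp.one_lt (by omega) ⟨w, ha⟩ hNotJames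
  have hpow (e : ℕ) (he : p ^ e ≤ b) : p ^ e + p ^ m ≤ b := by
    by_contra h
    exact hNotPointed ⟨e, b - p ^ e, by omega, by omega, hmb⟩
  have hc : ((a + p ^ m).choose (p ^ m) : k) ≠ 0 := by
    rw [Ne, CharP.cast_eq_zero_iff k p]
    simpa using hp.not_dvd_choose_add_pow_mul_succ ha hw (dvd_zero p)
  have hμ : DesignCoeffRelation (a + b) b μ := by
    simpa using IsUniversalDesign.designCoeffRelation (R := k) hu (by simp)
  refine ⟨μ (b - p ^ m) / (a + p ^ m).choose (p ^ m), fun j hj => sub_eq_zero.mp ?_⟩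
  refine (hμ.sub ((designCoeffRelation_choose (by omega)).const_mul _)).eq_zero hp ha hw hmb.le
    hpow ?_ j hj
  simp [show a + b - (b - p ^ m) = a + p ^ m by omega, show b - (b - p ^ m) = p ^ m by omega, hc]

/-- Let `k` be a field of characteristic `p` and `a ≥ b ≥ 1` such
that `(a,b)` is neither James (`p^{l_p(b)} ∣ a + 1`) nor pointed (`b = p^β + b̂` with
`b̂ < p^{ν_p(a+1)} < b`).  Every non-null universal `p`-ary design for `(a,b)` with
coefficients `μ_0, …, μ_{b−1}` is similar to the constant design: there is `α ∈ k` with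
`μ_j = α · C(a+b−j, b−j)` in `k` for all `j < b`. -/
theorem not_james_not_pointed_similar_to_constant (p : ℕ) (hp : p.Prime)
    (k : Type*) [Field k] [CharP k p]
    (a b : ℕ) (hb : 1 ≤ b) (hab : b ≤ a)
    (hNotJames : ¬ p ^ Nat.log p b ∣ a + 1)
    (hNotPointed : ¬ ∃ β bhat : ℕ, b = p ^ β + bhat ∧
        bhat < p ^ padicValNat p (a + 1) ∧ p ^ padicValNat p (a + 1) < b)
    (u : Finset (Fin (a + b)) → k) (μ : ℕ → k)
    (hu : ∀ t < b, ∀ Y : Finset (Fin (a + b)), Y.card = t →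
        ∑ X ∈ univ.filter (fun X : Finset (Fin (a + b)) => X.card = b ∧ Y ⊆ X), u X = μ t)
    (hnonnull : ∃ t < b, μ t ≠ 0) :
    ∃ α : k, ∀ j < b, μ j = α * (Nat.choose (a + b - j) (b - j) : k) :=
  not_james_not_pointed_similar_to_constant_general p hp k a b hb hNotJames hNotPointed u μ hu
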